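/- arXiv:2009.13027 — 5 statements merged into one kernel-verified Lean document; each statement's English description precedes it below -/
import Mathlib

section
/- Let U ⊆ ℂ be an open set, let f, g : U → ℝ be smooth positive functions, and let k₁, k₂ > 0 be real numbers. If H(f)(z) ≤ -k₁ and H(g)(z) ≤ -k₂ for all z ∈ U, then H(f+g)(z) ≤ -k₁k₂/(k₁+k₂) for all z ∈ U. -/
open Filter

/-- The Laplacian `Δu = ∂²u/∂x² + ∂²u/∂y²` of a function `u : ℂ → ℝ`,
where `ℂ ≅ ℝ²` with directions `1` and `I`. -/
noncomputable def planeLaplacian (u : ℂ → ℝ) (z : ℂ) : ℝ :=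
  fderiv ℝ (fun w => fderiv ℝ u w 1) z 1 +
    fderiv ℝ (fun w => fderiv ℝ u w Complex.I) z Complex.I

/-- The Gaussian curvature `H(g) = -(1/(4g)) Δ(log g)` of the conformal
metric `ds² = 2 g dz dz̄` with density `g`. -/
noncomputable def Hcurv (g : ℂ → ℝ) (z : ℂ) : ℝ :=
  -(1 / (4 * g z)) * planeLaplacian (fun w => Real.log (g w)) z

/-- first derivative of `log ∘ f` at points where `f` is positive. -/
lemma fderiv_log_apply_aux {U : Set ℂ} (hU : IsOpen U) {f : ℂ → ℝ}
    (hf : ContDiffOn ℝ (⊤ : ℕ∞) f U) (hfpos : ∀ z ∈ U, 0 < f z)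
    {w : ℂ} (hw : w ∈ U) (v : ℂ) :
    fderiv ℝ (fun x => Real.log (f x)) w v = (f w)⁻¹ * fderiv ℝ f w v := by
  have hfd : DifferentiableAt ℝ f w :=
    (hf.contDiffAt (hU.mem_nhds hw)).differentiableAt (by simp)
  have h := (Real.hasDerivAt_log (hfpos w hw).ne').comp_hasFDerivAt w hfd.hasFDerivAt
  have h2 : fderiv ℝ (fun x => Real.log (f x)) w = (f w)⁻¹ • fderiv ℝ f w := h.fderiv
  rw [h2]; simp

lemma diff_fderiv_apply {U : Set ℂ} (hU : IsOpen U) {f : ℂ → ℝ}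
    (hf : ContDiffOn ℝ (⊤ : ℕ∞) f U) {z : ℂ} (hz : z ∈ U) (v : ℂ) :
    DifferentiableAt ℝ (fun w => fderiv ℝ f w v) z := by
  have hfz : ContDiffAt ℝ (⊤ : ℕ∞) f z := hf.contDiffAt (hU.mem_nhds hz)
  have hD' : ContDiffAt ℝ (⊤ : ℕ∞) (fderiv ℝ f) z := hfz.fderiv_right (by simp)
  exact (hD'.differentiableAt (by simp)).clm_apply (differentiableAt_const v)

/-- second derivative of `log ∘ f` in direction `v`. -/
lemma second_log {U : Set ℂ} (hU : IsOpen U) {f : ℂ → ℝ}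
    (hf : ContDiffOn ℝ (⊤ : ℕ∞) f U) (hfpos : ∀ z ∈ U, 0 < f z)
    {z : ℂ} (hz : z ∈ U) (v : ℂ) :
    fderiv ℝ (fun w => fderiv ℝ (fun x => Real.log (f x)) w v) z v
      = (f z)⁻¹ * fderiv ℝ (fun w => fderiv ℝ f w v) z v
        - ((f z)⁻¹ * fderiv ℝ f z v) ^ 2 := by
  have hmem : U ∈ nhds z := hU.mem_nhds hz
  have hev : (fun w => fderiv ℝ (fun x => Real.log (f x)) w v)
      =ᶠ[nhds z] (fun w => (f w)⁻¹ * fderiv ℝ f w v) :=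
    eventually_of_mem hmem (fun w hw => fderiv_log_apply_aux hU hf hfpos hw v)
  rw [hev.fderiv_eq]
  have hfd : DifferentiableAt ℝ f z :=
    (hf.contDiffAt hmem).differentiableAt (by simp)
  have hDv : DifferentiableAt ℝ (fun w => fderiv ℝ f w v) z :=
    diff_fderiv_apply hU hf hz v
  have hne : f z ≠ 0 := (hfpos z hz).ne'
  have hinv : HasFDerivAt (fun w => (f w)⁻¹) ((-(f z ^ 2)⁻¹) • fderiv ℝ f z) z :=
    (hasDerivAt_inv hne).comp_hasFDerivAt z hfd.hasFDerivAt
  have hmul := hinv.mul hDv.hasFDerivAt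
  rw [HasFDerivAt.fderiv (f := fun w => (f w)⁻¹ * fderiv ℝ f w v) hmul]
  simp only [ContinuousLinearMap.add_apply, ContinuousLinearMap.coe_smul',
    Pi.smul_apply, smul_eq_mul]
  field_simp
  ring

/-- second derivative of a sum. -/
lemma second_add {U : Set ℂ} (hU : IsOpen U) {f g : ℂ → ℝ}
    (hf : ContDiffOn ℝ (⊤ : ℕ∞) f U) (hg : ContDiffOn ℝ (⊤ : ℕ∞) g U)
    {z : ℂ} (hz : z ∈ U) (v : ℂ) :
    fderiv ℝ (fun w => fderiv ℝ (fun x => f x + g x) w v) z v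
      = fderiv ℝ (fun w => fderiv ℝ f w v) z v
        + fderiv ℝ (fun w => fderiv ℝ g w v) z v := by
  have hmem : U ∈ nhds z := hU.mem_nhds hz
  have hev : (fun w => fderiv ℝ (fun x => f x + g x) w v)
      =ᶠ[nhds z] (fun w => fderiv ℝ f w v + fderiv ℝ g w v) := by
    refine eventually_of_mem hmem (fun w hw => ?_)
    have hfd : DifferentiableAt ℝ f w :=
      (hf.contDiffAt (hU.mem_nhds hw)).differentiableAt (by simp)
    have hgd : DifferentiableAt ℝ g w :=
      (hg.contDiffAt (hU.mem_nhds hw)).differentiableAt (by simp)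
    simp only [fderiv_fun_add hfd hgd, ContinuousLinearMap.add_apply]
  rw [hev.fderiv_eq, fderiv_fun_add (diff_fderiv_apply hU hf hz v)
    (diff_fderiv_apply hU hg hz v)]
  simp

lemma first_add {U : Set ℂ} (hU : IsOpen U) {f g : ℂ → ℝ}
    (hf : ContDiffOn ℝ (⊤ : ℕ∞) f U) (hg : ContDiffOn ℝ (⊤ : ℕ∞) g U)
    {z : ℂ} (hz : z ∈ U) (v : ℂ) :
    fderiv ℝ (fun x => f x + g x) z v = fderiv ℝ f z v + fderiv ℝ g z v := by
  have hfd : DifferentiableAt ℝ f z :=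
    (hf.contDiffAt (hU.mem_nhds hz)).differentiableAt (by simp)
  have hgd : DifferentiableAt ℝ g z :=
    (hg.contDiffAt (hU.mem_nhds hz)).differentiableAt (by simp)
  rw [fderiv_fun_add hfd hgd]; simp

/-- the key algebraic inequality. -/
lemma key_ineq (a b p q r s A B k₁ k₂ : ℝ) (ha : 0 < a) (hb : 0 < b)
    (hk₁ : 0 < k₁) (hk₂ : 0 < k₂)
    (h1 : 4 * k₁ * a ^ 3 + p ^ 2 + q ^ 2 ≤ A * a)
    (h2 : 4 * k₂ * b ^ 3 + r ^ 2 + s ^ 2 ≤ B * b) :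
    4 * (a + b) * (k₁ * k₂) / (k₁ + k₂)
      ≤ (A + B) / (a + b) - ((p + r) ^ 2 + (q + s) ^ 2) / (a + b) ^ 2 := by
  have hab : 0 < a + b := by linarith
  have hk : 0 < k₁ + k₂ := by linarith
  have hab' : 0 < a * b := mul_pos ha hb
  have hC : 4 * (k₁ * a ^ 2 + k₂ * b ^ 2) * (a + b)
      ≤ (A + B) * (a + b) - ((p + r) ^ 2 + (q + s) ^ 2) := by
    rw [← mul_le_mul_iff_right₀ hab']
    have t1 := mul_le_mul_of_nonneg_right h1 (show (0:ℝ) ≤ b * (a + b) by positivity)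
    have t2 := mul_le_mul_of_nonneg_right h2 (show (0:ℝ) ≤ a * (a + b) by positivity)
    nlinarith [t1, t2, sq_nonneg (b * p - a * r), sq_nonneg (b * q - a * s)]
  rw [div_le_iff₀ hk]
  have hE : (A + B) / (a + b) - ((p + r) ^ 2 + (q + s) ^ 2) / (a + b) ^ 2
      = ((A + B) * (a + b) - ((p + r) ^ 2 + (q + s) ^ 2)) / (a + b) ^ 2 := by
    field_simp
  rw [hE, div_mul_eq_mul_div, le_div_iff₀ (by positivity : (0:ℝ) < (a + b) ^ 2)]
  nlinarith [mul_le_mul_of_nonneg_left hC hk.le,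
    mul_nonneg (mul_nonneg (by norm_num : (0:ℝ) ≤ 4) hab.le) (sq_nonneg (k₁ * a - k₂ * b))]

/-- pointwise algebraic core. -/
lemma main_pt (a b p q r s A1 AI B1 BI k₁ k₂ : ℝ) (ha : 0 < a) (hb : 0 < b)
    (hk₁ : 0 < k₁) (hk₂ : 0 < k₂)
    (hf1 : -(1 / (4 * a)) *
      ((a⁻¹ * A1 - (a⁻¹ * p) ^ 2) + (a⁻¹ * AI - (a⁻¹ * q) ^ 2)) ≤ -k₁)
    (hg1 : -(1 / (4 * b)) *
      ((b⁻¹ * B1 - (b⁻¹ * r) ^ 2) + (b⁻¹ * BI - (b⁻¹ * s) ^ 2)) ≤ -k₂) :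
    -(1 / (4 * (a + b))) *
      (((a + b)⁻¹ * (A1 + B1) - ((a + b)⁻¹ * (p + r)) ^ 2)
        + ((a + b)⁻¹ * (AI + BI) - ((a + b)⁻¹ * (q + s)) ^ 2))
      ≤ -(k₁ * k₂) / (k₁ + k₂) := by
  have hab : 0 < a + b := by linarith
  have hLf : 4 * k₁ * a ≤ (a⁻¹ * A1 - (a⁻¹ * p) ^ 2) + (a⁻¹ * AI - (a⁻¹ * q) ^ 2) := by
    rw [neg_mul, neg_le_neg_iff] at hf1
    have h2 := mul_le_mul_of_nonneg_left hf1 (by positivity : (0:ℝ) ≤ 4 * a)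
    have e : (4 * a) * (1 / (4 * a) *
        ((a⁻¹ * A1 - (a⁻¹ * p) ^ 2) + (a⁻¹ * AI - (a⁻¹ * q) ^ 2)))
        = (a⁻¹ * A1 - (a⁻¹ * p) ^ 2) + (a⁻¹ * AI - (a⁻¹ * q) ^ 2) := by
      field_simp
    rw [e] at h2
    linarith
  have hLg : 4 * k₂ * b ≤ (b⁻¹ * B1 - (b⁻¹ * r) ^ 2) + (b⁻¹ * BI - (b⁻¹ * s) ^ 2) := by
    rw [neg_mul, neg_le_neg_iff] at hg1
    have h2 := mul_le_mul_of_nonneg_left hg1 (by positivity : (0:ℝ) ≤ 4 * b)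
    have e : (4 * b) * (1 / (4 * b) *
        ((b⁻¹ * B1 - (b⁻¹ * r) ^ 2) + (b⁻¹ * BI - (b⁻¹ * s) ^ 2)))
        = (b⁻¹ * B1 - (b⁻¹ * r) ^ 2) + (b⁻¹ * BI - (b⁻¹ * s) ^ 2) := by
      field_simp
    rw [e] at h2
    linarith
  have h1 : 4 * k₁ * a ^ 3 + p ^ 2 + q ^ 2 ≤ (A1 + AI) * a := by
    have h2 := mul_le_mul_of_nonneg_left hLf (by positivity : (0:ℝ) ≤ a ^ 2)
    have e : a ^ 2 * ((a⁻¹ * A1 - (a⁻¹ * p) ^ 2) + (a⁻¹ * AI - (a⁻¹ * q) ^ 2))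
        = (A1 + AI) * a - p ^ 2 - q ^ 2 := by
      field_simp; ring
    rw [e] at h2
    nlinarith [h2]
  have h2 : 4 * k₂ * b ^ 3 + r ^ 2 + s ^ 2 ≤ (B1 + BI) * b := by
    have h3 := mul_le_mul_of_nonneg_left hLg (by positivity : (0:ℝ) ≤ b ^ 2)
    have e : b ^ 2 * ((b⁻¹ * B1 - (b⁻¹ * r) ^ 2) + (b⁻¹ * BI - (b⁻¹ * s) ^ 2))
        = (B1 + BI) * b - r ^ 2 - s ^ 2 := by
      field_simp; ring
    rw [e] at h3
    nlinarith [h3]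
  have hkey := key_ineq a b p q r s (A1 + AI) (B1 + BI) k₁ k₂ ha hb hk₁ hk₂ h1 h2
  have hL2 : 4 * (a + b) * (k₁ * k₂) / (k₁ + k₂)
      ≤ ((a + b)⁻¹ * (A1 + B1) - ((a + b)⁻¹ * (p + r)) ^ 2)
        + ((a + b)⁻¹ * (AI + BI) - ((a + b)⁻¹ * (q + s)) ^ 2) := by
    have e : ((a + b)⁻¹ * (A1 + B1) - ((a + b)⁻¹ * (p + r)) ^ 2)
        + ((a + b)⁻¹ * (AI + BI) - ((a + b)⁻¹ * (q + s)) ^ 2)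
        = ((A1 + AI) + (B1 + BI)) / (a + b)
          - ((p + r) ^ 2 + (q + s) ^ 2) / (a + b) ^ 2 := by
      field_simp; ring
    rw [e]
    exact hkey
  have h3 := mul_le_mul_of_nonneg_left hL2 (by positivity : (0:ℝ) ≤ 1 / (4 * (a + b)))
  have e2 : 1 / (4 * (a + b)) * (4 * (a + b) * (k₁ * k₂) / (k₁ + k₂))
      = k₁ * k₂ / (k₁ + k₂) := by
    field_simp
  rw [e2] at h3
  rw [neg_mul, neg_div]
  linarith

/-- Proposition 3.1(d): if `H(f) ≤ -k₁ < 0` and `H(g) ≤ -k₂ < 0`, then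
`H(f+g) ≤ -k₁k₂/(k₁+k₂)`. -/
theorem Hcurv_add_le_of_neg (U : Set ℂ) (hU : IsOpen U) (f g : ℂ → ℝ)
    (hf : ContDiffOn ℝ (⊤ : ℕ∞) f U) (hfpos : ∀ z ∈ U, 0 < f z)
    (hg : ContDiffOn ℝ (⊤ : ℕ∞) g U) (hgpos : ∀ z ∈ U, 0 < g z)
    (k₁ k₂ : ℝ) (hk₁ : 0 < k₁) (hk₂ : 0 < k₂)
    (hHf : ∀ z ∈ U, Hcurv f z ≤ -k₁) (hHg : ∀ z ∈ U, Hcurv g z ≤ -k₂) :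
    ∀ z ∈ U, Hcurv (fun w => f w + g w) z ≤ -(k₁ * k₂) / (k₁ + k₂) := by
  intro z hz
  have ha : 0 < f z := hfpos z hz
  have hb : 0 < g z := hgpos z hz
  have hFG : ContDiffOn ℝ (⊤ : ℕ∞) (fun w => f w + g w) U := hf.add hg
  have hFGpos : ∀ w ∈ U, 0 < f w + g w := fun w hw =>
    add_pos (hfpos w hw) (hgpos w hw)
  have hf1 : Hcurv f z
      = -(1 / (4 * f z)) *
        (((f z)⁻¹ * fderiv ℝ (fun w => fderiv ℝ f w 1) z 1
            - ((f z)⁻¹ * fderiv ℝ f z 1) ^ 2)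
          + ((f z)⁻¹ * fderiv ℝ (fun w => fderiv ℝ f w Complex.I) z Complex.I
            - ((f z)⁻¹ * fderiv ℝ f z Complex.I) ^ 2)) := by
    rw [Hcurv, planeLaplacian, second_log hU hf hfpos hz 1,
      second_log hU hf hfpos hz Complex.I]
  have hg1 : Hcurv g z
      = -(1 / (4 * g z)) *
        (((g z)⁻¹ * fderiv ℝ (fun w => fderiv ℝ g w 1) z 1
            - ((g z)⁻¹ * fderiv ℝ g z 1) ^ 2)
          + ((g z)⁻¹ * fderiv ℝ (fun w => fderiv ℝ g w Complex.I) z Complex.I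
            - ((g z)⁻¹ * fderiv ℝ g z Complex.I) ^ 2)) := by
    rw [Hcurv, planeLaplacian, second_log hU hg hgpos hz 1,
      second_log hU hg hgpos hz Complex.I]
  have hsum : Hcurv (fun w => f w + g w) z
      = -(1 / (4 * (f z + g z))) *
        (((f z + g z)⁻¹ * (fderiv ℝ (fun w => fderiv ℝ f w 1) z 1
              + fderiv ℝ (fun w => fderiv ℝ g w 1) z 1)
            - ((f z + g z)⁻¹ * (fderiv ℝ f z 1 + fderiv ℝ g z 1)) ^ 2)
          + ((f z + g z)⁻¹ * (fderiv ℝ (fun w => fderiv ℝ f w Complex.I) z Complex.I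
              + fderiv ℝ (fun w => fderiv ℝ g w Complex.I) z Complex.I)
            - ((f z + g z)⁻¹ * (fderiv ℝ f z Complex.I + fderiv ℝ g z Complex.I)) ^ 2)) := by
    have e1 : fderiv ℝ (fun w => fderiv ℝ (fun x => Real.log (f x + g x)) w 1) z 1
        = (f z + g z)⁻¹ * fderiv ℝ (fun w => fderiv ℝ (fun x => f x + g x) w 1) z 1
          - ((f z + g z)⁻¹ * fderiv ℝ (fun x => f x + g x) z 1) ^ 2 :=
      second_log hU hFG hFGpos hz 1
    have eI : fderiv ℝ (fun w => fderiv ℝ (fun x => Real.log (f x + g x)) w Complex.I) z Complex.I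
        = (f z + g z)⁻¹ * fderiv ℝ (fun w => fderiv ℝ (fun x => f x + g x) w Complex.I) z Complex.I
          - ((f z + g z)⁻¹ * fderiv ℝ (fun x => f x + g x) z Complex.I) ^ 2 :=
      second_log hU hFG hFGpos hz Complex.I
    rw [Hcurv, planeLaplacian]
    rw [e1, eI, second_add hU hf hg hz 1, second_add hU hf hg hz Complex.I,
      first_add hU hf hg hz 1, first_add hU hf hg hz Complex.I]
  rw [hsum]
  exact main_pt (f z) (g z) (fderiv ℝ f z 1) (fderiv ℝ f z Complex.I)
    (fderiv ℝ g z 1) (fderiv ℝ g z Complex.I)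
    (fderiv ℝ (fun w => fderiv ℝ f w 1) z 1)
    (fderiv ℝ (fun w => fderiv ℝ f w Complex.I) z Complex.I)
    (fderiv ℝ (fun w => fderiv ℝ g w 1) z 1)
    (fderiv ℝ (fun w => fderiv ℝ g w Complex.I) z Complex.I)
    k₁ k₂ ha hb hk₁ hk₂ (hf1 ▸ hHf z hz) (hg1 ▸ hHg z hz)
end

section
/- Let U ⊆ ℂ be an open set, let h, g : U → ℝ be smooth positive functions, and let m > 0 be a real number. Then for every z ∈ U, H(m·h+g)(z) ≤ (m·h(z)/(m·h(z)+g(z)))² · (1/m) · H(h)(z) + (g(z)/(m·h(z)+g(z)))² · H(g)(z). -/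
lemma hasFDerivAt_log_comp {f : ℂ → ℝ} {z : ℂ} (hf : DifferentiableAt ℝ f z) (h0 : f z ≠ 0) :
    HasFDerivAt (fun w => Real.log (f w)) ((f z)⁻¹ • fderiv ℝ f z) z :=
  (Real.hasDerivAt_log h0).comp_hasFDerivAt z hf.hasFDerivAt

lemma second_deriv (U : Set ℂ) (hU : IsOpen U) (f : ℂ → ℝ)
    (hf : ContDiffOn ℝ (⊤ : ℕ∞) f U) (z : ℂ) (hz : z ∈ U) :
    HasFDerivAt (fderiv ℝ f) (fderiv ℝ (fderiv ℝ f) z) z := by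
  have h1 : ContDiffOn ℝ (⊤ : ℕ∞) (fderiv ℝ f) U := hf.fderiv_of_isOpen hU (by simp)
  exact ((h1.contDiffAt (hU.mem_nhds hz)).differentiableAt (by simp)).hasFDerivAt

lemma planeLaplacian_log (U : Set ℂ) (hU : IsOpen U) (f : ℂ → ℝ)
    (hf : ContDiffOn ℝ (⊤ : ℕ∞) f U) (hfpos : ∀ z ∈ U, 0 < f z) (z : ℂ) (hz : z ∈ U) :
    planeLaplacian (fun w => Real.log (f w)) z
      = planeLaplacian f z / f z
        - ((fderiv ℝ f z 1) ^ 2 + (fderiv ℝ f z Complex.I) ^ 2) / f z ^ 2 := by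
  have hfd : ∀ w ∈ U, DifferentiableAt ℝ f w := fun w hw =>
    (hf.contDiffAt (hU.mem_nhds hw)).differentiableAt (by simp)
  have hD2 := second_deriv U hU f hf z hz
  have key : ∀ v : ℂ,
      fderiv ℝ (fun w => fderiv ℝ (fun w => Real.log (f w)) w v) z v
        = fderiv ℝ (fun w => fderiv ℝ f w v) z v / f z
          - (fderiv ℝ f z v) ^ 2 / f z ^ 2 := by
    intro v
    have hev : (fun w => fderiv ℝ (fun w => Real.log (f w)) w v)
        =ᶠ[nhds z] fun w => (f w)⁻¹ * fderiv ℝ f w v := by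
      filter_upwards [hU.mem_nhds hz] with w hw
      rw [(hasFDerivAt_log_comp (hfd w hw) (hfpos w hw).ne').fderiv]
      simp
    have hq : HasFDerivAt (fun w => fderiv ℝ f w v)
        ((ContinuousLinearMap.apply ℝ ℝ v).comp (fderiv ℝ (fderiv ℝ f) z)) z :=
      (ContinuousLinearMap.apply ℝ ℝ v).hasFDerivAt.comp z hD2
    have hp : HasFDerivAt (fun w => (f w)⁻¹)
        (-(f z ^ 2)⁻¹ • fderiv ℝ f z) z := (hasDerivAt_inv (hfpos z hz).ne').comp_hasFDerivAt z (hfd z hz).hasFDerivAt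
    have hprod := hp.mul hq
    rw [hev.fderiv_eq, HasFDerivAt.fderiv (f := fun w => (f w)⁻¹ * fderiv ℝ f w v) hprod, hq.fderiv]
    have h0 : f z ≠ 0 := (hfpos z hz).ne'
    simp [ContinuousLinearMap.add_apply, ContinuousLinearMap.smul_apply]
    field_simp
    ring
  unfold planeLaplacian
  rw [key 1, key Complex.I]
  ring

example : True := trivial

lemma planeLaplacian_combo (U : Set ℂ) (hU : IsOpen U) (h g : ℂ → ℝ)
    (hh : ContDiffOn ℝ (⊤ : ℕ∞) h U) (hg : ContDiffOn ℝ (⊤ : ℕ∞) g U) (m : ℝ) (z : ℂ) (hz : z ∈ U) :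
    planeLaplacian (fun w => m * h w + g w) z
      = m * planeLaplacian h z + planeLaplacian g z := by
  have hhd : ∀ w ∈ U, DifferentiableAt ℝ h w := fun w hw =>
    (hh.contDiffAt (hU.mem_nhds hw)).differentiableAt (by simp)
  have hgd : ∀ w ∈ U, DifferentiableAt ℝ g w := fun w hw =>
    (hg.contDiffAt (hU.mem_nhds hw)).differentiableAt (by simp)
  have key : ∀ v : ℂ,
      fderiv ℝ (fun w => fderiv ℝ (fun w => m * h w + g w) w v) z v
        = m * fderiv ℝ (fun w => fderiv ℝ h w v) z v
          + fderiv ℝ (fun w => fderiv ℝ g w v) z v := by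
    intro v
    have hev : (fun w => fderiv ℝ (fun w => m * h w + g w) w v)
        =ᶠ[nhds z] fun w => m * fderiv ℝ h w v + fderiv ℝ g w v := by
      filter_upwards [hU.mem_nhds hz] with w hw
      rw [HasFDerivAt.fderiv (f := fun w => m * h w + g w) (((hhd w hw).hasFDerivAt.const_mul m).add (hgd w hw).hasFDerivAt)]
      simp
    have hqh : HasFDerivAt (fun w => fderiv ℝ h w v)
        ((ContinuousLinearMap.apply ℝ ℝ v).comp (fderiv ℝ (fderiv ℝ h) z)) z :=
      (ContinuousLinearMap.apply ℝ ℝ v).hasFDerivAt.comp z (second_deriv U hU h hh z hz)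
    have hqg : HasFDerivAt (fun w => fderiv ℝ g w v)
        ((ContinuousLinearMap.apply ℝ ℝ v).comp (fderiv ℝ (fderiv ℝ g) z)) z :=
      (ContinuousLinearMap.apply ℝ ℝ v).hasFDerivAt.comp z (second_deriv U hU g hg z hz)
    rw [hev.fderiv_eq, HasFDerivAt.fderiv (f := fun w => m * fderiv ℝ h w v + fderiv ℝ g w v) ((hqh.const_mul m).add hqg), hqh.fderiv, hqg.fderiv]
    simp
  unfold planeLaplacian
  rw [key 1, key Complex.I]
  ring

lemma fderiv_combo (h g : ℂ → ℝ) (m : ℝ) (z : ℂ) (hhd : DifferentiableAt ℝ h z)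
    (hgd : DifferentiableAt ℝ g z) (v : ℂ) :
    fderiv ℝ (fun w => m * h w + g w) z v = m * fderiv ℝ h z v + fderiv ℝ g z v := by
  rw [HasFDerivAt.fderiv (f := fun w => m * h w + g w) ((hhd.hasFDerivAt.const_mul m).add hgd.hasFDerivAt)]
  simp

lemma alg_ineq (a b m F hx hy gx gy Lh Lg : ℝ) (ha : 0 < a) (hb : 0 < b) (hm : 0 < m)
    (hF : F = m * a + b) :
    -(1 / (4 * F)) * ((m * Lh + Lg) / F - ((m * hx + gx) ^ 2 + (m * hy + gy) ^ 2) / F ^ 2)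
      ≤ (m * a / F) ^ 2 * (1 / m) * (-(1 / (4 * a)) * (Lh / a - (hx ^ 2 + hy ^ 2) / a ^ 2))
        + (b / F) ^ 2 * (-(1 / (4 * b)) * (Lg / b - (gx ^ 2 + gy ^ 2) / b ^ 2)) := by
  have hF0 : 0 < F := by rw [hF]; positivity
  rw [← sub_nonneg]
  have key : (m * a / F) ^ 2 * (1 / m) * (-(1 / (4 * a)) * (Lh / a - (hx ^ 2 + hy ^ 2) / a ^ 2))
        + (b / F) ^ 2 * (-(1 / (4 * b)) * (Lg / b - (gx ^ 2 + gy ^ 2) / b ^ 2))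
      - (-(1 / (4 * F)) * ((m * Lh + Lg) / F - ((m * hx + gx) ^ 2 + (m * hy + gy) ^ 2) / F ^ 2))
      = (m * (b * hx - a * gx) ^ 2 + m * (b * hy - a * gy) ^ 2) / (4 * F ^ 2 * (a * b * F)) := by
    subst hF
    field_simp
    ring
  rw [key]
  positivity

/-- For smooth positive `h, g` and `m > 0`,
`H(m·h+g) ≤ (m·h/(m·h+g))²·(1/m)·H(h) + (g/(m·h+g))²·H(g)`. -/
theorem Hcurv_smul_add_le (U : Set ℂ) (hU : IsOpen U) (h g : ℂ → ℝ)
    (hh : ContDiffOn ℝ (⊤ : ℕ∞) h U) (hhpos : ∀ z ∈ U, 0 < h z)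
    (hg : ContDiffOn ℝ (⊤ : ℕ∞) g U) (hgpos : ∀ z ∈ U, 0 < g z)
    (m : ℝ) (hm : 0 < m) :
    ∀ z ∈ U, Hcurv (fun w => m * h w + g w) z
      ≤ (m * h z / (m * h z + g z)) ^ 2 * (1 / m) * Hcurv h z
        + (g z / (m * h z + g z)) ^ 2 * Hcurv g z := by
  intro z hz
  have hhd : DifferentiableAt ℝ h z := (hh.contDiffAt (hU.mem_nhds hz)).differentiableAt (by simp)
  have hgd : DifferentiableAt ℝ g z := (hg.contDiffAt (hU.mem_nhds hz)).differentiableAt (by simp)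
  have hF : ContDiffOn ℝ (⊤ : ℕ∞) (fun w => m * h w + g w) U := (contDiffOn_const.mul hh).add hg
  have hFpos : ∀ w ∈ U, 0 < m * h w + g w := fun w hw => by
    have := hhpos w hw; have := hgpos w hw; positivity
  unfold Hcurv
  rw [planeLaplacian_log U hU _ hF hFpos z hz, planeLaplacian_log U hU _ hh hhpos z hz,
    planeLaplacian_log U hU _ hg hgpos z hz, planeLaplacian_combo U hU h g hh hg m z hz,
    fderiv_combo h g m z hhd hgd 1, fderiv_combo h g m z hhd hgd Complex.I]
  exact alg_ineq (h z) (g z) m (m * h z + g z) (fderiv ℝ h z 1) (fderiv ℝ h z Complex.I)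
    (fderiv ℝ g z 1) (fderiv ℝ g z Complex.I) (planeLaplacian h z) (planeLaplacian g z)
    (hhpos z hz) (hgpos z hz) hm rfl
end

section
/- (Ahlfors–Schwarz lemma) Let 𝔻 = {z ∈ ℂ : |z| < 1} be the open unit disc and let G : 𝔻 → ℝ be a smooth positive function with H(G)(z) ≤ -2 for all z ∈ 𝔻. Then G(z) ≤ 1/(1-|z|²)² for all z ∈ 𝔻. -/
open Filter Topology

/-- At a local max of `g` at `0`, if `g` has derivative `ψ t` eventually near `0`
and `ψ` has derivative `c` at `0`, then `c ≤ 0`. -/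
lemma AS.second_deriv_nonpos {g ψ : ℝ → ℝ} {c : ℝ}
    (hmax : IsLocalMax g 0)
    (hg : ∀ᶠ t in 𝓝 (0:ℝ), HasDerivAt g (ψ t) t)
    (hψ : HasDerivAt ψ c 0) : c ≤ 0 := by
  by_contra hc
  push_neg at hc
  have hψ0 : ψ 0 = 0 := hmax.hasDerivAt_eq_zero hg.self_of_nhds
  have hslope : Tendsto (fun t => ψ t / t) (𝓝[≠] (0:ℝ)) (𝓝 c) := by
    have h := hasDerivAt_iff_tendsto_slope.1 hψ
    have : slope ψ 0 = fun t => ψ t / t := by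
      ext t; simp [slope_def_field, hψ0]
    rwa [this] at h
  have hev : ∀ᶠ t in 𝓝 (0:ℝ), t ≠ 0 → 0 < ψ t / t :=
    eventually_nhdsWithin_iff.1 (hslope.eventually (eventually_gt_nhds hc))
  obtain ⟨ε, hεpos, hball⟩ := Metric.eventually_nhds_iff.1 ((hev.and hg).and hmax)
  have hmono : StrictMonoOn g (Set.Icc 0 (ε/2)) := by
    apply strictMonoOn_of_deriv_pos (convex_Icc _ _)
    · intro t ht
      have : dist t 0 < ε := by
        simp only [Real.dist_eq, sub_zero]
        rw [abs_of_nonneg ht.1]; linarith [ht.2]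
      exact ((hball this).1.2.differentiableAt.continuousAt).continuousWithinAt
    · intro t ht
      rw [interior_Icc] at ht
      have htd : dist t 0 < ε := by
        simp only [Real.dist_eq, sub_zero]
        rw [abs_of_pos ht.1]; linarith [ht.2]
      have hpos : 0 < ψ t / t := (hball htd).1.1 (ne_of_gt ht.1)
      have hψt : 0 < ψ t := by
        have := mul_pos hpos ht.1
        rwa [div_mul_cancel₀ _ (ne_of_gt ht.1)] at this
      rwa [(hball htd).1.2.deriv]
  have h0 : (0:ℝ) ∈ Set.Icc (0:ℝ) (ε/2) := by constructor <;> linarith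
  have h2' : ε/2 ∈ Set.Icc (0:ℝ) (ε/2) := by constructor <;> linarith
  have hlt := hmono h0 h2' (by linarith)
  have hle : g (ε/2) ≤ g 0 := by
    apply (hball (show dist (ε/2) 0 < ε by
      simp only [Real.dist_eq, sub_zero]; rw [abs_of_pos (by linarith)]; linarith)).2
  linarith

lemma AS.line_hasDerivAt {u : ℂ → ℝ} {z : ℂ} (hu : ContDiffAt ℝ 2 u z) (v : ℂ) :
    HasDerivAt (fun t : ℝ => fderiv ℝ u (z + t • v) v)
      (fderiv ℝ (fun w => fderiv ℝ u w v) z v) 0 := by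
  have hdf : DifferentiableAt ℝ (fderiv ℝ u) z := by
    have := hu.fderiv_right (m := 1) (by norm_num)
    exact this.differentiableAt one_ne_zero
  have hφ : DifferentiableAt ℝ (fun w => fderiv ℝ u w v) z :=
    hdf.clm_apply (differentiableAt_const v)
  have hL : HasDerivAt (fun t : ℝ => z + t • v) v 0 := by
    simpa using ((hasDerivAt_id (0:ℝ)).smul_const v).const_add z
  have h0 : z + ((0:ℝ)) • v = z := by norm_num
  have h := hφ.hasFDerivAt
  rw [← h0] at h
  have := h.comp_hasDerivAt 0 hL
  simpa [Function.comp_def] using this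

lemma AS.dir_deriv_nonpos {u : ℂ → ℝ} {z : ℂ} (hu : ContDiffAt ℝ 2 u z)
    (hmax : IsLocalMax u z) (v : ℂ) :
    fderiv ℝ (fun w => fderiv ℝ u w v) z v ≤ 0 := by
  set L : ℝ → ℂ := fun t => z + t • v with hLdef
  have hL0 : L 0 = z := by simp [hLdef]
  have hgmax : IsLocalMax (u ∘ L) 0 := by
    apply IsLocalMax.comp_continuous
    · rw [hL0]; exact hmax
    · exact (by continuity : Continuous L).continuousAt
  have hTend : Tendsto L (𝓝 0) (𝓝 z) := by
    rw [← hL0]; exact ((by continuity : Continuous L).continuousAt)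
  have hev : ∀ᶠ w in 𝓝 z, ContDiffAt ℝ 2 u w := hu.eventually (by simp)
  have hgd : ∀ᶠ t in 𝓝 (0:ℝ), HasDerivAt (u ∘ L) (fderiv ℝ u (L t) v) t := by
    filter_upwards [hTend.eventually hev] with t ht
    have hdL : HasDerivAt L v t := by
      simpa [hLdef] using ((hasDerivAt_id t).smul_const v).const_add z
    exact (ht.differentiableAt (by norm_num)).hasFDerivAt.comp_hasDerivAt t hdL
  exact AS.second_deriv_nonpos hgmax hgd (by simpa [hLdef] using AS.line_hasDerivAt hu v)

lemma AS.planeLaplacian_nonpos {u : ℂ → ℝ} {z : ℂ} (hu : ContDiffAt ℝ 2 u z)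
    (hmax : IsLocalMax u z) : planeLaplacian u z ≤ 0 := by
  have h1 := AS.dir_deriv_nonpos hu hmax 1
  have hI := AS.dir_deriv_nonpos hu hmax Complex.I
  unfold planeLaplacian
  linarith

lemma AS.planeLaplacian_add {f g : ℂ → ℝ} {z : ℂ}
    (hf : ContDiffAt ℝ 2 f z) (hg : ContDiffAt ℝ 2 g z) :
    planeLaplacian (fun w => f w + g w) z = planeLaplacian f z + planeLaplacian g z := by
  have key : ∀ v : ℂ, fderiv ℝ (fun w => fderiv ℝ (fun w' => f w' + g w') w v) z v
      = fderiv ℝ (fun w => fderiv ℝ f w v) z v + fderiv ℝ (fun w => fderiv ℝ g w v) z v := by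
    intro v
    have hev : ∀ᶠ w in 𝓝 z, (fun w => fderiv ℝ (fun w' => f w' + g w') w v) w
        = fderiv ℝ f w v + fderiv ℝ g w v := by
      filter_upwards [hf.eventually (by simp), hg.eventually (by simp)] with w hfw hgw
      rw [fderiv_fun_add (hfw.differentiableAt (by norm_num)) (hgw.differentiableAt (by norm_num))]
      simp
    have hdf : DifferentiableAt ℝ (fun w => fderiv ℝ f w v) z :=
      ((hf.fderiv_right (m := 1) (by norm_num)).differentiableAt one_ne_zero).clm_apply
        (differentiableAt_const v)
    have hdg : DifferentiableAt ℝ (fun w => fderiv ℝ g w v) z :=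
      ((hg.fderiv_right (m := 1) (by norm_num)).differentiableAt one_ne_zero).clm_apply
        (differentiableAt_const v)
    rw [Filter.EventuallyEq.fderiv_eq hev, fderiv_fun_add hdf hdg]
    simp
  simp only [planeLaplacian, key]
  ring

section metric
variable {r : ℝ}

lemma AS.Aeq : (fun w : ℂ => r^2 - ‖w‖^2)
    = fun w => r^2 - (w.re*w.re + w.im*w.im) := by
  ext w; rw [Complex.sq_norm, Complex.normSq_apply]

lemma AS.hA (w : ℂ) : HasFDerivAt (fun w : ℂ => r^2 - ‖w‖^2)
    (-((w.re • Complex.reCLM + w.re • Complex.reCLM)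
       + (w.im • Complex.imCLM + w.im • Complex.imCLM))) w := by
  rw [AS.Aeq]
  have hre : HasFDerivAt (fun w : ℂ => w.re) Complex.reCLM w := Complex.reCLM.hasFDerivAt
  have him : HasFDerivAt (fun w : ℂ => w.im) Complex.imCLM w := Complex.imCLM.hasFDerivAt
  exact ((hre.mul hre).add (him.mul him)).const_sub _

lemma AS.Asmooth : ContDiff ℝ (⊤ : ℕ∞) (fun w : ℂ => r^2 - ‖w‖^2) := by
  rw [AS.Aeq]
  have hre : ContDiff ℝ (⊤ : ℕ∞) (fun w : ℂ => w.re) := Complex.reCLM.contDiff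
  have him : ContDiff ℝ (⊤ : ℕ∞) (fun w : ℂ => w.im) := Complex.imCLM.contDiff
  exact contDiff_const.sub ((hre.mul hre).add (him.mul him))

lemma AS.log_metric_smooth {z : ℂ} (hz : ‖z‖ < r) :
    ContDiffAt ℝ 2 (fun w => 2 * Real.log (r^2 - ‖w‖^2)) z := by
  have hne : r^2 - ‖z‖^2 ≠ 0 := by
    have h0 : 0 ≤ ‖z‖ := norm_nonneg z
    nlinarith
  exact (contDiffAt_const.mul (AS.Asmooth.contDiffAt.log hne)).of_le (by exact WithTop.coe_le_coe.2 (le_top : (2:ℕ∞) ≤ ⊤))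

lemma AS.hP {w : ℂ} (hw : r^2 - ‖w‖^2 ≠ 0) :
    HasFDerivAt (fun w => 2 * Real.log (r^2 - ‖w‖^2))
      ((2 * (r^2 - ‖w‖^2)⁻¹) •
        (-((w.re • Complex.reCLM + w.re • Complex.reCLM)
           + (w.im • Complex.imCLM + w.im • Complex.imCLM)))) w :=
  by
    have h := AS.hA (r := r) w
    have h2 := ((Real.hasDerivAt_log hw).const_mul 2).comp_hasFDerivAt w h
    exact h2

lemma AS.fderiv_P_one {w : ℂ} (hw : r^2 - ‖w‖^2 ≠ 0) :
    fderiv ℝ (fun w => 2 * Real.log (r^2 - ‖w‖^2)) w 1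
      = (-4 * w.re) * (r^2 - ‖w‖^2)⁻¹ := by
  rw [(AS.hP hw).fderiv]
  simp [Complex.reCLM_apply, Complex.imCLM_apply]
  ring

lemma AS.fderiv_P_I {w : ℂ} (hw : r^2 - ‖w‖^2 ≠ 0) :
    fderiv ℝ (fun w => 2 * Real.log (r^2 - ‖w‖^2)) w Complex.I
      = (-4 * w.im) * (r^2 - ‖w‖^2)⁻¹ := by
  rw [(AS.hP hw).fderiv]
  simp [Complex.reCLM_apply, Complex.imCLM_apply]
  ring

lemma AS.log_metric_lap {z : ℂ} (hz : ‖z‖ < r) :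
    planeLaplacian (fun w => 2 * Real.log (r^2 - ‖w‖^2)) z
      = -8 * r^2 / (r^2 - ‖z‖^2)^2 := by
  have hApos : 0 < r^2 - ‖z‖^2 := by
    have h0 : 0 ≤ ‖z‖ := norm_nonneg z
    nlinarith
  have hAne : r^2 - ‖z‖^2 ≠ 0 := ne_of_gt hApos
  have hevpos : ∀ᶠ w in 𝓝 z, 0 < r^2 - ‖w‖^2 := by
    have hc : Continuous (fun w : ℂ => r^2 - ‖w‖^2) := AS.Asmooth.continuous
    exact (hc.continuousAt).eventually (eventually_gt_nhds hApos)
  have hev1 : (fun w => fderiv ℝ (fun w' => 2 * Real.log (r^2 - ‖w'‖^2)) w 1)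
      =ᶠ[𝓝 z] (fun w => (-4 * w.re) * (r^2 - ‖w‖^2)⁻¹) := by
    filter_upwards [hevpos] with w hw
    exact AS.fderiv_P_one (ne_of_gt hw)
  have hevI : (fun w => fderiv ℝ (fun w' => 2 * Real.log (r^2 - ‖w'‖^2)) w Complex.I)
      =ᶠ[𝓝 z] (fun w => (-4 * w.im) * (r^2 - ‖w‖^2)⁻¹) := by
    filter_upwards [hevpos] with w hw
    exact AS.fderiv_P_I (ne_of_gt hw)
  have hre : HasFDerivAt (fun w : ℂ => w.re) Complex.reCLM z := Complex.reCLM.hasFDerivAt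
  have him : HasFDerivAt (fun w : ℂ => w.im) Complex.imCLM z := Complex.imCLM.hasFDerivAt
  have hinv : HasFDerivAt (fun w : ℂ => (r^2 - ‖w‖^2)⁻¹)
      ((-((r^2 - ‖z‖^2)^2)⁻¹) •
        (-((z.re • Complex.reCLM + z.re • Complex.reCLM)
           + (z.im • Complex.imCLM + z.im • Complex.imCLM)))) z :=
    (hasDerivAt_inv hAne).comp_hasFDerivAt z (AS.hA z)
  have h1 : HasFDerivAt (fun w : ℂ => (-4 * w.re) * (r^2 - ‖w‖^2)⁻¹) _ z :=
    (hre.const_mul (-4)).mul hinv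
  have hI : HasFDerivAt (fun w : ℂ => (-4 * w.im) * (r^2 - ‖w‖^2)⁻¹) _ z :=
    (him.const_mul (-4)).mul hinv
  rw [planeLaplacian, hev1.fderiv_eq, hevI.fderiv_eq, h1.fderiv, hI.fderiv]
  simp only [ContinuousLinearMap.add_apply, ContinuousLinearMap.smul_apply,
    ContinuousLinearMap.neg_apply, Complex.reCLM_apply, Complex.imCLM_apply,
    ContinuousLinearMap.coe_smul', Pi.smul_apply, smul_eq_mul,
    Complex.one_re, Complex.one_im, Complex.I_re, Complex.I_im]
  have habs : ‖z‖^2 = z.re*z.re + z.im*z.im := by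
    rw [Complex.sq_norm, Complex.normSq_apply]
  rw [habs] at hAne ⊢
  field_simp
  ring
end metric

/-- **Ahlfors–Schwarz lemma.** If `G` is a smooth positive function on the
unit disc with `H(G) ≤ -2`, then `G(z) ≤ (1-|z|²)⁻²`. -/
theorem ahlfors_schwarz (G : ℂ → ℝ)
    (hG : ContDiffOn ℝ (⊤ : ℕ∞) G (Metric.ball (0 : ℂ) 1))
    (hGpos : ∀ z ∈ Metric.ball (0 : ℂ) 1, 0 < G z)
    (hHG : ∀ z ∈ Metric.ball (0 : ℂ) 1, Hcurv G z ≤ -2) :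
    ∀ z ∈ Metric.ball (0 : ℂ) 1, G z ≤ 1 / (1 - ‖z‖ ^ 2) ^ 2 := by
  intro z hz
  have hz1 : ‖z‖ < 1 := by
    simpa [Complex.dist_eq] using Metric.mem_ball.1 hz
  have habs0 : (0:ℝ) ≤ ‖z‖ := norm_nonneg z
  -- key estimate for each r ∈ (|z|, 1)
  have key : ∀ r : ℝ, ‖z‖ < r → r < 1 →
      G z * (r^2 - ‖z‖^2)^2 ≤ r^2 := by
    intro r hzr hr1
    have hr0 : 0 < r := lt_of_le_of_lt habs0 hzr
    set F : ℂ → ℝ := fun w => G w * (r^2 - ‖w‖^2)^2 with hFdef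
    have hsub : Metric.closedBall (0:ℂ) r ⊆ Metric.ball (0:ℂ) 1 :=
      Metric.closedBall_subset_ball hr1
    have hFcont : ContinuousOn F (Metric.closedBall (0:ℂ) r) := by
      apply ContinuousOn.mul (hG.continuousOn.mono hsub)
      exact ((AS.Asmooth (r := r)).continuous.pow 2).continuousOn
    obtain ⟨w₀, hw₀S, hw₀max⟩ := (isCompact_closedBall (0:ℂ) r).exists_isMaxOn
      ⟨0, by simpa using le_of_lt hr0⟩ hFcont
    have hzS : z ∈ Metric.closedBall (0:ℂ) r := by
      simpa [Complex.dist_eq] using le_of_lt hzr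
    have hFz : 0 < F z := by
      have h1 : 0 < G z := hGpos z hz
      have h2 : 0 < r^2 - ‖z‖^2 := by nlinarith
      positivity
    have hFzw₀ : F z ≤ F w₀ := hw₀max hzS
    -- w₀ is interior
    have hw₀lt : ‖w₀‖ < r := by
      rcases lt_or_eq_of_le (show ‖w₀‖ ≤ r by
        simpa [Complex.dist_eq] using Metric.mem_closedBall.1 hw₀S) with h | h
      · exact h
      · exfalso
        have : F w₀ = 0 := by simp [hFdef, h]
        linarith
    have hw₀1 : w₀ ∈ Metric.ball (0:ℂ) 1 := hsub hw₀S
    have hGw₀ : 0 < G w₀ := hGpos w₀ hw₀1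
    have hA₀ : 0 < r^2 - ‖w₀‖^2 := by
      have := norm_nonneg w₀; nlinarith
    -- local max of u := log G + 2 log(r² - |·|²) at w₀
    set u : ℂ → ℝ := fun w => Real.log (G w) + 2 * Real.log (r^2 - ‖w‖^2) with hudef
    have hw₀ball : w₀ ∈ Metric.ball (0:ℂ) r := by
      simpa [Complex.dist_eq] using hw₀lt
    have hulog : ∀ w ∈ Metric.ball (0:ℂ) r, u w = Real.log (F w) := by
      intro w hw
      have hwlt : ‖w‖ < r := by
        simpa [Complex.dist_eq] using Metric.mem_ball.1 hw
      have hGw : 0 < G w := hGpos w (hsub (Metric.ball_subset_closedBall hw))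
      have hAw : 0 < r^2 - ‖w‖^2 := by
        have := norm_nonneg w; nlinarith
      rw [hFdef]
      simp only
      rw [Real.log_mul (ne_of_gt hGw) (by positivity), Real.log_pow]
      push_cast [hudef]
      ring
    have humax : IsLocalMax u w₀ := by
      filter_upwards [Metric.isOpen_ball.mem_nhds hw₀ball] with w hw
      rw [hulog w hw, hulog w₀ hw₀ball]
      have hFw : 0 < F w := by
        have hwlt : ‖w‖ < r := by
          simpa [Complex.dist_eq] using Metric.mem_ball.1 hw
        have hGw : 0 < G w := hGpos w (hsub (Metric.ball_subset_closedBall hw))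
        have hAw : 0 < r^2 - ‖w‖^2 := by
          have := norm_nonneg w; nlinarith
        positivity
      exact Real.log_le_log hFw (hw₀max (Metric.ball_subset_closedBall hw))
    -- smoothness
    have hlogG : ContDiffAt ℝ 2 (fun w => Real.log (G w)) w₀ := by
      have hGat : ContDiffAt ℝ (⊤ : ℕ∞) G w₀ :=
        hG.contDiffAt (Metric.isOpen_ball.mem_nhds hw₀1)
      exact (hGat.log (ne_of_gt hGw₀)).of_le (by exact WithTop.coe_le_coe.2 (le_top : (2:ℕ∞) ≤ ⊤))
    have hlogM : ContDiffAt ℝ 2 (fun w => 2 * Real.log (r^2 - ‖w‖^2)) w₀ :=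
      AS.log_metric_smooth hw₀lt
    have hu2 : ContDiffAt ℝ 2 u w₀ := hlogG.add hlogM
    -- Laplacian estimate
    have hlaple : planeLaplacian u w₀ ≤ 0 := AS.planeLaplacian_nonpos hu2 humax
    have hlapadd : planeLaplacian u w₀
        = planeLaplacian (fun w => Real.log (G w)) w₀
          + (-8 * r^2 / (r^2 - ‖w₀‖^2)^2) := by
      rw [hudef]
      rw [AS.planeLaplacian_add hlogG hlogM, AS.log_metric_lap hw₀lt]
    have hH := hHG w₀ hw₀1
    rw [Hcurv] at hH
    have hPge : 8 * G w₀ ≤ planeLaplacian (fun w => Real.log (G w)) w₀ := by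
      set P := planeLaplacian (fun w => Real.log (G w)) w₀ with hPdef
      have h4G : 0 < 4 * G w₀ := by linarith
      have h2 : (2:ℝ) ≤ (1/(4 * G w₀)) * P := by linarith
      have h3 := mul_le_mul_of_nonneg_left h2 h4G.le
      have h4 : 4 * G w₀ * ((1/(4 * G w₀)) * P) = P := by field_simp
      linarith
    have hGw₀le : G w₀ * (r^2 - ‖w₀‖^2)^2 ≤ r^2 := by
      have h8 : 8 * G w₀ ≤ 8 * r^2 / (r^2 - ‖w₀‖^2)^2 := by
        rw [hlapadd] at hlaple
        have hdiv : -8 * r^2 / (r^2 - ‖w₀‖^2)^2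
            = -(8 * r^2 / (r^2 - ‖w₀‖^2)^2) := by ring
        rw [hdiv] at hlaple
        linarith
      have hA2 : 0 < (r^2 - ‖w₀‖^2)^2 := by positivity
      rw [le_div_iff₀ hA2] at h8
      nlinarith
    calc G z * (r^2 - ‖z‖^2)^2 = F z := rfl
      _ ≤ F w₀ := hFzw₀
      _ ≤ r^2 := hGw₀le
  -- pass to the limit r → 1⁻
  have hlim : G z * (1 - ‖z‖^2)^2 ≤ 1 := by
    have htend : Tendsto (fun r : ℝ => G z * (r^2 - ‖z‖^2)^2 - r^2)
        (𝓝[<] (1:ℝ)) (𝓝 (G z * (1 - ‖z‖^2)^2 - 1)) := by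
      have hc : Continuous (fun r : ℝ => G z * (r^2 - ‖z‖^2)^2 - r^2) := by
        continuity
      have := hc.continuousAt (x := (1:ℝ)).tendsto
      simp only [one_pow] at this
      exact this.mono_left nhdsWithin_le_nhds
    have hev : ∀ᶠ r in 𝓝[<] (1:ℝ), G z * (r^2 - ‖z‖^2)^2 - r^2 ≤ 0 := by
      filter_upwards [Ioo_mem_nhdsLT_of_mem ⟨hz1, le_refl (1:ℝ)⟩] with r hr
      have := key r hr.1 hr.2
      linarith
    have := le_of_tendsto htend hev
    linarith
  have h1a : 0 < 1 - ‖z‖^2 := by nlinarith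
  have hpos : 0 < (1 - ‖z‖^2)^2 := by positivity
  rw [le_div_iff₀ hpos]
  linarith
end

section
/- Let Ω ⊆ ℂⁿ be an open set and let g : Ω → Matrix(n,n,ℂ) be a map assigning to each p ∈ Ω a positive definite Hermitian matrix g(p); write ‖v‖²_{g,p} = Re(v* · g(p) · v) for v ∈ ℂⁿ. Suppose there exist r > 0 and C > 0 such that for every p ∈ Ω there is a holomorphic map ψ : B(0,r) → Ω from the Euclidean ball B(0,r) ⊆ ℂⁿ with ψ(0) = p, Dψ(0) invertible, and ‖Dψ(w)u‖²_{g,ψ(w)} ≥ C⁻¹·‖u‖² for all w ∈ B(0,r) and u ∈ ℂⁿ. Then the Carathéodory–Reiffen metric satisfies γ_Ω(p; v) ≤ (√C/r)·‖v‖_{g,p} for every p ∈ Ω and v ∈ ℂⁿ. -/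
/-! Write `p = ψ 0` and `v = Dψ(0) u`. For a holomorphic `f : Ω → 𝔻`, the map `f ∘ ψ` is bounded
by `1` on the ball of radius `r`, so the Schwarz lemma gives `|Df(p) v| ≤ ‖u‖ / r`, while the lower
bound on `g` at `w = 0` gives `‖u‖ ≤ √C · ‖v‖_{g,p}`. -/

open scoped ComplexOrder

/-- The Carathéodory–Reiffen metric of `Ω`:
`γ_Ω(z; v) = sup { |Df(z)v| : f : Ω → ℂ holomorphic, |f| < 1 on Ω }`. -/
noncomputable def caratheodoryReiffen {E : Type*} [NormedAddCommGroup E] [NormedSpace ℂ E]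
    (Ω : Set E) (z v : E) : ℝ :=
  sSup {t : ℝ | ∃ f : E → ℂ, DifferentiableOn ℂ f Ω ∧
    (∀ w ∈ Ω, ‖f w‖ < 1) ∧ t = ‖fderiv ℂ f z v‖}

/-- The squared length `‖v‖²_{g,p} = Re(v* · g(p) · v)` of a tangent vector `v`
with respect to a Hermitian metric `g` given by a matrix field. -/
noncomputable def gNormSq {n : ℕ} (g : EuclideanSpace ℂ (Fin n) → Matrix (Fin n) (Fin n) ℂ)
    (p v : EuclideanSpace ℂ (Fin n)) : ℝ :=
  (∑ i, ∑ j, (starRingEnd ℂ) (v i) * g p i j * v j).re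

open Metric Set

section
variable {E F : Type*} [NormedAddCommGroup E] [NormedSpace ℂ E]
  [NormedAddCommGroup F] [NormedSpace ℂ F]

/-- The odd part `z ↦ (f z - f (2c - z)) / 2` has the same derivative at `c` as `f`, vanishes
at `c` and is still bounded by `M`, so the Schwarz lemma applies to it without losing a factor 2. -/
theorem Complex.norm_fderiv_le_div_of_norm_le {f : E → F} {c : E} {R M : ℝ}
    (hd : DifferentiableOn ℂ f (ball c R)) (hR : 0 < R) (hM : ∀ z ∈ ball c R, ‖f z‖ ≤ M) :
    ‖fderiv ℂ f c‖ ≤ M / R := by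
  set σ : E → E := fun z ↦ (2 : ℂ) • c - z
  have hσ : MapsTo σ (ball c R) (ball c R) := fun z hz ↦ by
    simp only [σ, mem_ball, dist_eq_norm, two_smul] at hz ⊢
    rwa [show c + c - z - c = -(z - c) by abel, norm_neg]
  have hσc : σ c = c := by simp [σ, two_smul]
  set G : E → F := fun z ↦ (2 : ℂ)⁻¹ • (f z - f (σ z))
  have hGd : DifferentiableOn ℂ G (ball c R) :=
    (hd.sub (hd.comp (by fun_prop : Differentiable ℂ σ).differentiableOn hσ)).const_smul _
  have hGc : G c = 0 := by simp [G, hσc]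
  have hGM : MapsTo G (ball c R) (closedBall (G c) M) := fun z hz ↦ by
    rw [hGc, mem_closedBall_zero_iff]
    calc ‖G z‖ ≤ 2⁻¹ * (‖f z‖ + ‖f (σ z)‖) := by
          simp only [G, norm_smul, norm_inv, Complex.norm_two]
          gcongr
          exact norm_sub_le _ _
      _ ≤ M := by linarith [hM z hz, hM _ (hσ hz)]
  have hfc : HasFDerivAt f (fderiv ℂ f c) c :=
    (hd.differentiableAt (ball_mem_nhds c hR)).hasFDerivAt
  have hσ' : HasFDerivAt σ (-ContinuousLinearMap.id ℂ E) c := by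
    simpa using (hasFDerivAt_id c).const_sub ((2 : ℂ) • c)
  have hGc' : HasFDerivAt G (fderiv ℂ f c) c := by
    have := (hfc.sub ((hσc ▸ hfc).comp c hσ')).const_smul (2 : ℂ)⁻¹
    rwa [hσc, ContinuousLinearMap.comp_neg, ContinuousLinearMap.comp_id, sub_neg_eq_add,
      ← two_smul ℂ, smul_smul, inv_mul_cancel₀ two_ne_zero, one_smul] at this
  simpa [hGc'.fderiv] using Complex.norm_fderiv_le_div_of_mapsTo_ball hGd hGM hR

theorem Complex.norm_fderiv_apply_fderiv_le_of_mapsTo_ball {Ω : Set F} (hΩ : IsOpen Ω)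
    {f : F → ℂ} {ψ : E → F} {c : E} {r M : ℝ} (hf : DifferentiableOn ℂ f Ω)
    (hfM : ∀ y ∈ Ω, ‖f y‖ ≤ M) (hψ : DifferentiableOn ℂ ψ (ball c r))
    (hψΩ : MapsTo ψ (ball c r) Ω) (hr : 0 < r) (u : E) :
    ‖fderiv ℂ f (ψ c) (fderiv ℂ ψ c u)‖ ≤ M / r * ‖u‖ := by
  have hc : c ∈ ball c r := mem_ball_self hr
  have hchain : fderiv ℂ (f ∘ ψ) c = (fderiv ℂ f (ψ c)).comp (fderiv ℂ ψ c) :=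
    fderiv_comp c (hf.differentiableAt (hΩ.mem_nhds (hψΩ hc)))
      (hψ.differentiableAt (isOpen_ball.mem_nhds hc))
  have hbound : ‖fderiv ℂ (f ∘ ψ) c‖ ≤ M / r :=
    Complex.norm_fderiv_le_div_of_norm_le (hf.comp hψ hψΩ) hr fun z hz ↦ hfM _ (hψΩ hz)
  rw [← ContinuousLinearMap.comp_apply, ← hchain]
  exact (ContinuousLinearMap.le_opNorm _ u).trans (by gcongr)

end

theorem caratheodoryReiffen_le_of_quasi_bounded_general {n : ℕ}
    (Ω : Set (EuclideanSpace ℂ (Fin n))) (hΩ : IsOpen Ω)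
    (g : EuclideanSpace ℂ (Fin n) → Matrix (Fin n) (Fin n) ℂ)
    (r C : ℝ) (hr : 0 < r) (hC : 0 < C)
    (hquasi : ∀ p ∈ Ω, ∃ ψ : EuclideanSpace ℂ (Fin n) → EuclideanSpace ℂ (Fin n),
      DifferentiableOn ℂ ψ (Metric.ball 0 r) ∧
      (∀ w ∈ Metric.ball (0 : EuclideanSpace ℂ (Fin n)) r, ψ w ∈ Ω) ∧
      ψ 0 = p ∧ Function.Bijective (fderiv ℂ ψ 0) ∧
      ∀ w ∈ Metric.ball (0 : EuclideanSpace ℂ (Fin n)) r,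
        ∀ u : EuclideanSpace ℂ (Fin n),
          gNormSq g (ψ w) (fderiv ℂ ψ w u) ≥ C⁻¹ * ‖u‖ ^ 2) :
    ∀ p ∈ Ω, ∀ v : EuclideanSpace ℂ (Fin n),
      caratheodoryReiffen Ω p v ≤ (Real.sqrt C / r) * Real.sqrt (gNormSq g p v) := by
  intro p hp v
  obtain ⟨ψ, hψ, hψΩ, rfl, hψbij, hψg⟩ := hquasi p hp
  obtain ⟨u, rfl⟩ := hψbij.2 v
  have hu : ‖u‖ ≤ √C * √(gNormSq g (ψ 0) (fderiv ℂ ψ 0 u)) := by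
    rw [← Real.sqrt_mul hC.le]
    exact Real.le_sqrt_of_sq_le ((inv_mul_le_iff₀ hC).1 (hψg 0 (mem_ball_self hr) u))
  refine Real.sSup_le ?_ (by positivity)
  rintro _ ⟨f, hf, hf1, rfl⟩
  calc ‖fderiv ℂ f (ψ 0) (fderiv ℂ ψ 0 u)‖ ≤ 1 / r * ‖u‖ :=
        Complex.norm_fderiv_apply_fderiv_le_of_mapsTo_ball hΩ hf (fun y hy ↦ (hf1 y hy).le) hψ
          (fun w hw ↦ hψΩ w hw) hr u
    _ ≤ 1 / r * (√C * √(gNormSq g (ψ 0) (fderiv ℂ ψ 0 u))) := by gcongr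
    _ = √C / r * √(gNormSq g (ψ 0) (fderiv ℂ ψ 0 u)) := by ring

/-- The lower metric bound of quasi-bounded geometry implies the upper bound
`γ_Ω(p; v) ≤ (√C/r)·‖v‖_{g,p}` for the Carathéodory–Reiffen metric. -/
theorem caratheodoryReiffen_le_of_quasi_bounded {n : ℕ}
    (Ω : Set (EuclideanSpace ℂ (Fin n))) (hΩ : IsOpen Ω)
    (g : EuclideanSpace ℂ (Fin n) → Matrix (Fin n) (Fin n) ℂ)
    (hg : ∀ p ∈ Ω, (g p).PosDef)
    (r C : ℝ) (hr : 0 < r) (hC : 0 < C)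
    (hquasi : ∀ p ∈ Ω, ∃ ψ : EuclideanSpace ℂ (Fin n) → EuclideanSpace ℂ (Fin n),
      DifferentiableOn ℂ ψ (Metric.ball 0 r) ∧
      (∀ w ∈ Metric.ball (0 : EuclideanSpace ℂ (Fin n)) r, ψ w ∈ Ω) ∧
      ψ 0 = p ∧ Function.Bijective (fderiv ℂ ψ 0) ∧
      ∀ w ∈ Metric.ball (0 : EuclideanSpace ℂ (Fin n)) r,
        ∀ u : EuclideanSpace ℂ (Fin n),
          gNormSq g (ψ w) (fderiv ℂ ψ w u) ≥ C⁻¹ * ‖u‖ ^ 2) :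
    ∀ p ∈ Ω, ∀ v : EuclideanSpace ℂ (Fin n),
      caratheodoryReiffen Ω p v ≤ (Real.sqrt C / r) * Real.sqrt (gNormSq g p v) :=
  caratheodoryReiffen_le_of_quasi_bounded_general Ω hΩ g r C hr hC hquasi
end

section
/- Let Ω ⊆ ℂⁿ be an open set and let g : Ω → Matrix(n,n,ℂ) be a map assigning to each p ∈ Ω a positive definite Hermitian matrix g(p); write ‖v‖²_{g,p} = Re(v* · g(p) · v) for v ∈ ℂⁿ. Suppose there exist r > 0 and C > 0 such that for every p ∈ Ω there is a holomorphic map ψ : B(0,r) → Ω from the Euclidean ball B(0,r) ⊆ ℂⁿ with ψ(0) = p, Dψ(0) invertible, and ‖Dψ(w)u‖²_{g,ψ(w)} ≥ C⁻¹·‖u‖² for all w ∈ B(0,r) and u ∈ ℂⁿ. Then the Kobayashi–Royden metric satisfies χ_Ω(p; v) ≤ (√C/r)·‖v‖_{g,p} for every p ∈ Ω and v ∈ ℂⁿ. -/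
open scoped ComplexOrder

/-- The Kobayashi–Royden metric of `Ω`:
`χ_Ω(z; v) = inf { 1/α : α > 0, ∃ f : 𝔻 → Ω holomorphic, f(0) = z, Df(0)(1) = α·v }`. -/
noncomputable def kobayashiRoyden {E : Type*} [NormedAddCommGroup E] [NormedSpace ℂ E]
    (Ω : Set E) (z v : E) : ℝ :=
  sInf {t : ℝ | ∃ α : ℝ, 0 < α ∧
    (∃ f : ℂ → E, DifferentiableOn ℂ f (Metric.ball 0 1) ∧
      (∀ w ∈ Metric.ball (0 : ℂ) 1, f w ∈ Ω) ∧ f 0 = z ∧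
      fderiv ℂ f 0 1 = (α : ℂ) • v) ∧
    t = 1 / α}

/-- The lower metric bound of quasi-bounded geometry implies the upper bound
`χ_Ω(p; v) ≤ (√C/r)·‖v‖_{g,p}` for the Kobayashi–Royden metric. -/
theorem kobayashiRoyden_le_of_quasi_bounded {n : ℕ}
    (Ω : Set (EuclideanSpace ℂ (Fin n))) (hΩ : IsOpen Ω)
    (g : EuclideanSpace ℂ (Fin n) → Matrix (Fin n) (Fin n) ℂ)
    (hg : ∀ p ∈ Ω, (g p).PosDef)
    (r C : ℝ) (hr : 0 < r) (hC : 0 < C)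
    (hquasi : ∀ p ∈ Ω, ∃ ψ : EuclideanSpace ℂ (Fin n) → EuclideanSpace ℂ (Fin n),
      DifferentiableOn ℂ ψ (Metric.ball 0 r) ∧
      (∀ w ∈ Metric.ball (0 : EuclideanSpace ℂ (Fin n)) r, ψ w ∈ Ω) ∧
      ψ 0 = p ∧ Function.Bijective (fderiv ℂ ψ 0) ∧
      ∀ w ∈ Metric.ball (0 : EuclideanSpace ℂ (Fin n)) r,
        ∀ u : EuclideanSpace ℂ (Fin n),
          gNormSq g (ψ w) (fderiv ℂ ψ w u) ≥ C⁻¹ * ‖u‖ ^ 2) :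
    ∀ p ∈ Ω, ∀ v : EuclideanSpace ℂ (Fin n),
      kobayashiRoyden Ω p v ≤ (Real.sqrt C / r) * Real.sqrt (gNormSq g p v) := by
  intro p hp v
  have hkr : kobayashiRoyden Ω p v = sInf {t : ℝ | ∃ α : ℝ, 0 < α ∧
    (∃ f : ℂ → EuclideanSpace ℂ (Fin n), DifferentiableOn ℂ f (Metric.ball 0 1) ∧
      (∀ w ∈ Metric.ball (0 : ℂ) 1, f w ∈ Ω) ∧ f 0 = p ∧
      fderiv ℂ f 0 1 = (α : ℂ) • v) ∧
    t = 1 / α} := rfl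
  have hbdd : BddBelow {t : ℝ | ∃ α : ℝ, 0 < α ∧
    (∃ f : ℂ → EuclideanSpace ℂ (Fin n), DifferentiableOn ℂ f (Metric.ball 0 1) ∧
      (∀ w ∈ Metric.ball (0 : ℂ) 1, f w ∈ Ω) ∧ f 0 = p ∧
      fderiv ℂ f 0 1 = (α : ℂ) • v) ∧
    t = 1 / α} := by
    refine ⟨0, fun t ht => ?_⟩
    obtain ⟨α, hα, -, rfl⟩ := ht
    positivity
  by_cases hv : v = 0
  · subst hv
    have hrhs : gNormSq g p 0 = 0 := by simp [gNormSq]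
    rw [hrhs, Real.sqrt_zero, mul_zero]
    have key : ∀ ε : ℝ, 0 < ε → kobayashiRoyden Ω p 0 ≤ ε := by
      intro ε hε
      rw [hkr]
      refine csInf_le hbdd ⟨1/ε, by positivity, ⟨fun _ => p, differentiableOn_const p,
        fun w _ => hp, rfl, by simp⟩, by field_simp⟩
    refine le_of_forall_pos_le_add fun ε hε => ?_
    simpa using key ε hε
  · obtain ⟨ψ, hψdiff, hψmap, hψ0, hψbij, hψlow⟩ := hquasi p hp
    obtain ⟨u, hu⟩ := hψbij.surjective v
    have h0mem : (0 : EuclideanSpace ℂ (Fin n)) ∈ Metric.ball (0 : EuclideanSpace ℂ (Fin n)) r := by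
      simp [hr]
    have hu0 : u ≠ 0 := by
      rintro rfl
      exact hv (by rw [← hu, map_zero])
    have hun : 0 < ‖u‖ := norm_pos_iff.mpr hu0
    set α : ℝ := r / ‖u‖ with hα
    have hαpos : 0 < α := by positivity
    set c : EuclideanSpace ℂ (Fin n) := (α : ℂ) • u with hc
    have hcnorm : ‖c‖ = r := by
      rw [hc, norm_smul, Complex.norm_real, Real.norm_eq_abs, abs_of_pos hαpos, hα]
      field_simp
    set L := ContinuousLinearMap.toSpanSingleton ℂ c with hL
    set f : ℂ → EuclideanSpace ℂ (Fin n) := fun ζ => ψ (ζ • c) with hf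
    have hmapball : ∀ ζ ∈ Metric.ball (0 : ℂ) 1,
        ζ • c ∈ Metric.ball (0 : EuclideanSpace ℂ (Fin n)) r := by
      intro ζ hζ
      simp only [Metric.mem_ball, dist_zero_right] at hζ ⊢
      rw [norm_smul, hcnorm]
      calc ‖ζ‖ * r < 1 * r := mul_lt_mul_of_pos_right hζ hr
        _ = r := one_mul r
    have hψat : DifferentiableAt ℂ ψ 0 :=
      hψdiff.differentiableAt (Metric.isOpen_ball.mem_nhds h0mem)
    have hfderiv : HasFDerivAt f ((fderiv ℂ ψ 0).comp L) 0 := by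
      have h1 : HasFDerivAt (fun ζ : ℂ => ζ • c) L 0 := L.hasFDerivAt
      have h2 : HasFDerivAt ψ (fderiv ℂ ψ 0) ((0 : ℂ) • c) := by
        rw [zero_smul]; exact hψat.hasFDerivAt
      exact h2.comp 0 h1
    have hf1 : fderiv ℂ f 0 1 = (α : ℂ) • v := by
      rw [hfderiv.fderiv]
      simp only [ContinuousLinearMap.comp_apply, hL,
        ContinuousLinearMap.toSpanSingleton_apply, one_smul, hc, map_smul, hu]
    have hfdiff : DifferentiableOn ℂ f (Metric.ball 0 1) := by
      refine hψdiff.comp (L.differentiable.differentiableOn) ?_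
      intro ζ hζ
      exact hmapball ζ hζ
    have hmemS : ‖u‖ / r ∈ {t : ℝ | ∃ α : ℝ, 0 < α ∧
        (∃ f : ℂ → EuclideanSpace ℂ (Fin n), DifferentiableOn ℂ f (Metric.ball 0 1) ∧
          (∀ w ∈ Metric.ball (0 : ℂ) 1, f w ∈ Ω) ∧ f 0 = p ∧
          fderiv ℂ f 0 1 = (α : ℂ) • v) ∧
        t = 1 / α} := by
      refine ⟨α, hαpos, ⟨f, hfdiff, fun w hw => hψmap _ (hmapball w hw), ?_, hf1⟩, ?_⟩
      · show ψ ((0 : ℂ) • c) = p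
        rw [zero_smul, hψ0]
      · rw [hα]
        field_simp
    have hχ : kobayashiRoyden Ω p v ≤ ‖u‖ / r := by
      rw [hkr]; exact csInf_le hbdd hmemS
    have hlow := hψlow 0 h0mem u
    rw [hψ0, hu] at hlow
    have hg0 : 0 ≤ gNormSq g p v := le_trans (by positivity) hlow
    have hnorm_le : ‖u‖ ≤ Real.sqrt C * Real.sqrt (gNormSq g p v) := by
      rw [← Real.sqrt_mul_self (le_of_lt hun), ← Real.sqrt_mul hC.le]
      refine Real.sqrt_le_sqrt ?_
      rw [← sq]
      calc ‖u‖ ^ 2 = C * (C⁻¹ * ‖u‖ ^ 2) := by field_simp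
        _ ≤ C * gNormSq g p v := by
            exact mul_le_mul_of_nonneg_left hlow hC.le
    calc kobayashiRoyden Ω p v ≤ ‖u‖ / r := hχ
      _ ≤ Real.sqrt C * Real.sqrt (gNormSq g p v) / r :=
          div_le_div_of_nonneg_right hnorm_le hr.le |>.trans_eq rfl
      _ = Real.sqrt C / r * Real.sqrt (gNormSq g p v) := by ring
end
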